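/- arXiv:1907.04535 — 9 statements merged into one kernel-verified Lean document; each statement's English description precedes it below -/
import Mathlib

section
/- A subset S of vertices of a connected graph G is a general position set if and only if the components of the subgraph of G induced by S are complete subgraphs whose vertex sets form an intransitive, distance-constant partition of S. -/
/-- `S` is a general position set of `G`: no three distinct vertices of `S`
lie on a common geodesic. -/
def isGPSet {V : Type*} (G : SimpleGraph V) (S : Set V) : Prop :=
  ∀ u ∈ S, ∀ v ∈ S, ∀ w ∈ S, u ≠ v → v ≠ w → u ≠ w →
    G.dist u v ≠ G.dist u w + G.dist w v

/-!
If three vertices of a general position set induce a path `a - b - c`, then `1 < d(a, c) ≤ 2`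
puts `b` on an `a`-`c` geodesic; so induced components are cliques. For adjacent `u, u'` and a
third vertex `v`, the distances `d(v, u)` and `d(v, u')` differ by at most one and, again by
general position, not by exactly one, which makes the partition distance-constant;
intransitivity is general position read on representatives. Conversely, take three distinct
vertices and sort them by how many classes they meet: inside one class all distances are `1`;
two vertices in one class reduce the geodesic equation to `1 = 2 d` or `d = 1 + d`; three
classes are handled by intransitivity.
-/

open SimpleGraph

namespace isGPSet

variable {V : Type*} {G : SimpleGraph V} {S : Set V}

theorem adj_of_adj_of_adj (hS : isGPSet G S) {a b c : V} (ha : a ∈ S) (hb : b ∈ S)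
    (hc : c ∈ S) (hac : a ≠ c) (hab : G.Adj a b) (hbc : G.Adj b c) : G.Adj a c := by
  have hpos : 0 < G.dist a c := (hab.reachable.trans hbc.reachable).pos_dist_of_ne hac
  have hle : G.dist a c ≤ G.dist a b + G.dist b c := hab.reachable.dist_triangle_left c
  have hgp := hS a ha c hc b hb hac hbc.ne' hab.ne
  rw [dist_eq_one_iff_adj.mpr hab, dist_eq_one_iff_adj.mpr hbc] at hle hgp
  exact dist_eq_one_iff_adj.mp (by omega)

theorem dist_eq_of_adj (hS : isGPSet G S) {u u' v : V} (hu : u ∈ S) (hu' : u' ∈ S)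
    (hv : v ∈ S) (hadj : G.Adj u u') (hvu : v ≠ u) (hvu' : v ≠ u') :
    G.dist v u = G.dist v u' := by
  have hgp := hS v hv u' hu' u hu hvu' hadj.ne' hvu
  have hgp' := hS v hv u hu u' hu' hvu hadj.ne hvu'
  rw [dist_eq_one_iff_adj.mpr hadj] at hgp
  rw [dist_eq_one_iff_adj.mpr hadj.symm] at hgp'
  have := hadj.diff_dist_adj (u := v)
  omega

theorem eq_or_adj_of_connectedComponentMk_eq (hS : isGPSet G S) {u v : S}
    (h : (G.induce S).connectedComponentMk u = (G.induce S).connectedComponentMk v) :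
    u = v ∨ G.Adj u v := by
  obtain ⟨p⟩ := ConnectedComponent.exact h
  clear h
  induction p with
  | nil => exact .inl rfl
  | @cons a b c hab _ ih =>
    rcases ih with rfl | hbc
    · exact .inr hab
    by_cases hac : a = c
    · exact .inl hac
    exact .inr (hS.adj_of_adj_of_adj a.2 b.2 c.2 (Subtype.coe_ne_coe.mpr hac) hab hbc)

theorem dist_eq_of_connectedComponentMk_eq (hS : isGPSet G S) {u u' v : S}
    (hu : (G.induce S).connectedComponentMk u = (G.induce S).connectedComponentMk u')
    (hv : (G.induce S).connectedComponentMk u ≠ (G.induce S).connectedComponentMk v) :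
    G.dist (u : V) v = G.dist (u' : V) v := by
  rcases hS.eq_or_adj_of_connectedComponentMk_eq hu with rfl | hadj
  · rfl
  have hvu : (v : V) ≠ u := Subtype.coe_ne_coe.mpr (ne_of_apply_ne _ hv).symm
  have hvu' : (v : V) ≠ u' := Subtype.coe_ne_coe.mpr (ne_of_apply_ne _ (hu ▸ hv)).symm
  rw [dist_comm, hS.dist_eq_of_adj u.2 u'.2 v.2 hadj hvu hvu', dist_comm]

end isGPSet

theorem isGPSet_of_intransitive_partition {V ι : Type*} {G : SimpleGraph V} {S : Set V}
    (c : S → ι) (hclique : ∀ u v : S, c u = c v → u ≠ v → G.Adj u v)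
    (hconst : ∀ u u' v v' : S, c u = c u' → c v = c v' → c u ≠ c v →
      G.dist (u : V) v = G.dist (u' : V) v')
    (hintrans : ∀ u v w : S, c u ≠ c v → c v ≠ c w → c u ≠ c w →
      G.dist (u : V) w ≠ G.dist (u : V) v + G.dist (v : V) w) :
    isGPSet G S := by
  suffices h : ∀ x y z : S, x ≠ y → y ≠ z → x ≠ z →
      G.dist (x : V) y ≠ G.dist (x : V) z + G.dist (z : V) y from
    fun u hu v hv w hw huv hvw huw ↦ h ⟨u, hu⟩ ⟨v, hv⟩ ⟨w, hw⟩
      (by simpa using huv) (by simpa using hvw) (by simpa using huw)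
  intro x y z hxy hyz hxz
  have hone : ∀ a b : S, c a = c b → a ≠ b → G.dist (a : V) b = 1 :=
    fun a b hab hne ↦ dist_eq_one_iff_adj.mpr (hclique a b hab hne)
  by_cases cxy : c x = c y
  · by_cases cxz : c x = c z
    · have := hone z y (cxz.symm.trans cxy) hyz.symm
      have := hone x y cxy hxy
      have := hone x z cxz hxz
      omega
    · have := hconst x y z z cxy rfl cxz
      rw [dist_comm (u := (z : V))]
      have := hone x y cxy hxy
      omega
  by_cases cxz : c x = c z
  · have := hconst z x y y cxz.symm rfl (cxz ▸ cxy)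
    have := hone x z cxz hxz
    omega
  by_cases czy : c z = c y
  · have := hconst x x z y rfl czy cxz
    have := hone z y czy hyz.symm
    omega
  exact hintrans x z y cxz czy cxy

theorem stmt_0_general {V : Type*} (G : SimpleGraph V) (S : Set V) :
    isGPSet G S ↔
      ((∀ u v : S, (G.induce S).connectedComponentMk u = (G.induce S).connectedComponentMk v →
          u ≠ v → G.Adj u v) ∧
       (∀ u u' v v' : S,
          (G.induce S).connectedComponentMk u = (G.induce S).connectedComponentMk u' →
          (G.induce S).connectedComponentMk v = (G.induce S).connectedComponentMk v' →
          (G.induce S).connectedComponentMk u ≠ (G.induce S).connectedComponentMk v →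
          G.dist (u : V) v = G.dist (u' : V) v') ∧
       (∀ u v w : S,
          (G.induce S).connectedComponentMk u ≠ (G.induce S).connectedComponentMk v →
          (G.induce S).connectedComponentMk v ≠ (G.induce S).connectedComponentMk w →
          (G.induce S).connectedComponentMk u ≠ (G.induce S).connectedComponentMk w →
          G.dist (u : V) w ≠ G.dist (u : V) v + G.dist (v : V) w)) := by
  refine ⟨fun hS ↦ ⟨?_, ?_, ?_⟩,
    fun ⟨hclique, hconst, hintrans⟩ ↦ isGPSet_of_intransitive_partition _ hclique hconst hintrans⟩
  · exact fun u v huv hne ↦ (hS.eq_or_adj_of_connectedComponentMk_eq huv).resolve_left hne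
  · intro u u' v v' hu hv huv
    calc G.dist (u : V) v = G.dist (u' : V) v := hS.dist_eq_of_connectedComponentMk_eq hu huv
      _ = G.dist (u' : V) v' := by
        rw [dist_comm, hS.dist_eq_of_connectedComponentMk_eq hv (fun h ↦ huv (hu.trans h.symm)),
          dist_comm]
  · intro u v w huv hvw huw
    have hne {a b : S}
        (h : (G.induce S).connectedComponentMk a ≠ (G.induce S).connectedComponentMk b) :
        (a : V) ≠ b :=
      Subtype.coe_ne_coe.mpr (ne_of_apply_ne _ h)
    exact hS u u.2 w w.2 v v.2 (hne huw) (hne hvw).symm (hne huv)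

theorem stmt_0 {V : Type*} [Fintype V] (G : SimpleGraph V) (hG : G.Connected)
    (S : Set V) :
    isGPSet G S ↔
      ((∀ u v : S, (G.induce S).connectedComponentMk u = (G.induce S).connectedComponentMk v →
          u ≠ v → G.Adj u v) ∧
       (∀ u u' v v' : S,
          (G.induce S).connectedComponentMk u = (G.induce S).connectedComponentMk u' →
          (G.induce S).connectedComponentMk v = (G.induce S).connectedComponentMk v' →
          (G.induce S).connectedComponentMk u ≠ (G.induce S).connectedComponentMk v →
          G.dist (u : V) v = G.dist (u' : V) v') ∧
       (∀ u v w : S,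
          (G.induce S).connectedComponentMk u ≠ (G.induce S).connectedComponentMk v →
          (G.induce S).connectedComponentMk v ≠ (G.induce S).connectedComponentMk w →
          (G.induce S).connectedComponentMk u ≠ (G.induce S).connectedComponentMk w →
          G.dist (u : V) w ≠ G.dist (u : V) v + G.dist (v : V) w)) :=
  stmt_0_general G S
end

section
/- If G is a bipartite connected graph whose general position number is at least 3, then every maximum general position set of G is an independent set. -/
/-- The general position number of `G`: the largest size of a general position set. -/
noncomputable def gpNum {V : Type*} (G : SimpleGraph V) : ℕ :=
  sSup {n | ∃ S : Finset V, isGPSet G ↑S ∧ S.card = n}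

/-!
In a bipartite graph every closed walk has even length, so the distances from any vertex `w`
to the two ends `u`, `v` of an edge have different parity; as they differ by at most one,
one of them is the other plus one. Then `u` (or `v`) lies on a geodesic from the other end
to `w`, so no general position set can contain an edge together with a third vertex.
-/

namespace SimpleGraph

variable {V : Type*} {G : SimpleGraph V}

lemma Colorable.dist_ne_of_adj (hbip : G.Colorable 2) {u v w : V} (hadj : G.Adj v w)
    (hreach : G.Reachable u v) : G.dist u v ≠ G.dist u w := by
  obtain ⟨p, hp⟩ := hreach.exists_walk_length_eq_dist
  obtain ⟨q, hq⟩ := (hreach.trans hadj.reachable).exists_walk_length_eq_dist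
  have hloop : Even ((p.concat hadj).append q.reverse).length :=
    two_colorable_iff_forall_loop_even.mp hbip u _
  rw [Walk.length_append, Walk.length_concat, Walk.length_reverse, hp, hq] at hloop
  intro h
  rw [h, add_right_comm, ← two_mul] at hloop
  exact Nat.not_even_two_mul_add_one _ hloop

lemma Colorable.dist_eq_dist_add_one_of_adj (hbip : G.Colorable 2) (hG : G.Connected)
    (u : V) {v w : V} (hadj : G.Adj v w) :
    G.dist u v = G.dist u w + 1 ∨ G.dist u w = G.dist u v + 1 := by
  have := hbip.dist_ne_of_adj hadj (hG u v)
  grind [Adj.diff_dist_adj]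

end SimpleGraph

lemma isGPSet.not_adj {V : Type*} {G : SimpleGraph V} {S : Set V} (hS : isGPSet G S)
    (hG : G.Connected) (hbip : G.Colorable 2) {u v w : V} (hu : u ∈ S) (hv : v ∈ S)
    (hw : w ∈ S) (hwu : w ≠ u) (hwv : w ≠ v) : ¬ G.Adj u v := by
  intro hadj
  have huv : u ≠ v := hadj.ne
  rcases hbip.dist_eq_dist_add_one_of_adj hG w hadj with h | h
  · refine hS u hu w hw v hv hwu.symm hwv huv ?_
    rw [G.dist_comm, h, G.dist_eq_one_iff_adj.mpr hadj, G.dist_comm, add_comm]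
  · refine hS v hv w hw u hu hwv.symm hwu huv.symm ?_
    rw [G.dist_comm, h, G.dist_eq_one_iff_adj.mpr hadj.symm, G.dist_comm, add_comm]

theorem stmt_1_general {V : Type*} (G : SimpleGraph V) (hG : G.Connected)
    (hbip : G.Colorable 2) (hgp : 3 ≤ gpNum G) :
    ∀ S : Finset V, isGPSet G ↑S → S.card = gpNum G →
      ∀ u ∈ S, ∀ v ∈ S, ¬ G.Adj u v := by
  classical
  intro S hS hcard u hu v hv
  have hlt : ({u, v} : Finset V).card < S.card := by
    have := Finset.card_le_two (a := u) (b := v)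
    omega
  obtain ⟨w, hw, hwuv⟩ := Finset.exists_mem_notMem_of_card_lt_card hlt
  simp only [Finset.mem_insert, Finset.mem_singleton, not_or] at hwuv
  exact hS.not_adj hG hbip hu hv hw hwuv.1 hwuv.2

theorem stmt_1 {V : Type*} [Fintype V] (G : SimpleGraph V) (hG : G.Connected)
    (hbip : G.Colorable 2) (hgp : 3 ≤ gpNum G) :
    ∀ S : Finset V, isGPSet G ↑S → S.card = gpNum G →
      ∀ u ∈ S, ∀ v ∈ S, ¬ G.Adj u v :=
  stmt_1_general G hG hbip hgp
end

section
/- If {H_1, …, H_k} is an isometric cover of a connected graph G, then gp(G) ≤ gp(H_1) + ⋯ + gp(H_k). -/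
/-! Distances in an isometric subgraph are those of `G`, so a general position set of `G` meets
each `H i` in a general position set of `H i`; as the `H i` cover `V`, these pieces exhaust it. -/

open Finset

lemma isGPSet.preimage {V W : Type*} {G : SimpleGraph V} {G' : SimpleGraph W} {S : Set V}
    (hS : isGPSet G S) {f : W → V} (hf : Function.Injective f)
    (hdist : ∀ a b, G'.dist a b = G.dist (f a) (f b)) : isGPSet G' (f ⁻¹' S) := by
  intro u hu v hv w hw huv hvw huw
  simpa only [hdist] using hS _ hu _ hv _ hw (hf.ne huv) (hf.ne hvw) (hf.ne huw)

lemma card_le_gpNum {V : Type*} [Finite V] {G : SimpleGraph V} {S : Finset V}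
    (hS : isGPSet G S) : #S ≤ gpNum G := by
  have := Fintype.ofFinite V
  refine le_csSup ⟨Fintype.card V, ?_⟩ ⟨S, hS, rfl⟩
  rintro n ⟨T, -, rfl⟩
  exact T.card_le_univ

lemma gpNum_le {V : Type*} {G : SimpleGraph V} {m : ℕ}
    (h : ∀ S : Finset V, isGPSet G S → #S ≤ m) : gpNum G ≤ m :=
  csSup_le ⟨0, ∅, fun u hu => by simp at hu, rfl⟩ (by rintro n ⟨S, hS, rfl⟩; exact h S hS)

lemma card_filter_mem_verts_le_gpNum {V : Type*} [Finite V] {G : SimpleGraph V}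
    (H : G.Subgraph) (hiso : ∀ u v : H.verts, H.coe.dist u v = G.dist (u : V) v)
    {S : Finset V} (hS : isGPSet G S) [DecidablePred (· ∈ H.verts)] :
    #(S.filter (· ∈ H.verts)) ≤ gpNum H.coe := by
  rw [← card_subtype]
  refine card_le_gpNum ?_
  have hcoe : (S.subtype (· ∈ H.verts) : Set H.verts) = Subtype.val ⁻¹' S := by ext; simp
  exact hcoe ▸ hS.preimage Subtype.val_injective hiso

theorem stmt_2_general {V : Type*} [Fintype V] (G : SimpleGraph V)
    (k : ℕ) (H : Fin k → G.Subgraph)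
    (hiso : ∀ i, ∀ u v : (H i).verts, ((H i).coe.dist u v = G.dist (u : V) v))
    (hcover : ∀ v : V, ∃ i, v ∈ (H i).verts) :
    gpNum G ≤ ∑ i, gpNum (H i).coe := by
  classical
  refine gpNum_le fun S hS => ?_
  have hS_cover : S ⊆ univ.biUnion fun i => S.filter (· ∈ (H i).verts) := fun v hv => by
    obtain ⟨i, hi⟩ := hcover v
    exact mem_biUnion.2 ⟨i, mem_univ i, mem_filter.2 ⟨hv, hi⟩⟩
  calc #S ≤ ∑ i, #(S.filter (· ∈ (H i).verts)) := (card_le_card hS_cover).trans card_biUnion_le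
    _ ≤ ∑ i, gpNum (H i).coe :=
      sum_le_sum fun i _ => card_filter_mem_verts_le_gpNum (H i) (hiso i) hS

theorem stmt_2 {V : Type*} [Fintype V] (G : SimpleGraph V) (hG : G.Connected)
    (k : ℕ) (H : Fin k → G.Subgraph)
    (hiso : ∀ i, ∀ u v : (H i).verts, ((H i).coe.dist u v = G.dist (u : V) v))
    (hcover : ∀ v : V, ∃ i, v ∈ (H i).verts) :
    gpNum G ≤ ∑ i, gpNum (H i).coe :=
  stmt_2_general G k H hiso hcover
end

section
/- For all r ≥ 3 and s ≥ 3, the general position number of the grid graph P_r □ P_s equals 4. -/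
open Finset SimpleGraph

lemma Fin.exists_lt_lt_mem_uIcc_of_five {β : Type*} [LinearOrder β] (y : Fin 5 → β) :
    ∃ i j k : Fin 5, i < j ∧ j < k ∧ y j ∈ Set.uIcc (y i) (y k) := by
  -- If `y 1, y 2, y 3` is not monotone, `y 2` is a strict extremum; then comparing `y 0` with
  -- `y 1`, `y 4` with `y 3`, and `y 1` with `y 3` yields a monotone triple.
  by_contra! h
  have h123 := h 1 2 3 (by decide) (by decide)
  have h012 := h 0 1 2 (by decide) (by decide)
  have h234 := h 2 3 4 (by decide) (by decide)
  have h013 := h 0 1 3 (by decide) (by decide)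
  have h134 := h 1 3 4 (by decide) (by decide)
  simp only [Set.mem_uIcc, not_or, not_and_or, not_le] at *
  grind

lemma Finset.exists_mem_uIcc_of_five_le_card {α β : Type*} [LinearOrder α] [LinearOrder β]
    {S : Finset (α × β)} (hS : 5 ≤ S.card) :
    ∃ u ∈ S, ∃ v ∈ S, ∃ w ∈ S, u ≠ v ∧ v ≠ w ∧ u ≠ w ∧
      w.1 ∈ Set.uIcc u.1 v.1 ∧ w.2 ∈ Set.uIcc u.2 v.2 := by
  -- Sorting five points lexicographically makes the first coordinates monotone.
  obtain ⟨T, hTS, hT⟩ := exists_subset_card_eq hS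
  set f := (T.map toLex.toEmbedding).orderEmbOfFin (by simpa using hT)
  have hfT (i : Fin 5) : ofLex (f i) ∈ S := by
    have := (T.map toLex.toEmbedding).orderEmbOfFin_mem (by simpa using hT) i
    rw [Finset.mem_map_equiv] at this
    exact hTS this
  have hf_ne {i j : Fin 5} (h : i ≠ j) : ofLex (f i) ≠ ofLex (f j) :=
    fun e => h (f.injective (ofLex.injective e))
  obtain ⟨i, j, k, hij, hjk, hy⟩ := Fin.exists_lt_lt_mem_uIcc_of_five fun i => (ofLex (f i)).2
  refine ⟨_, hfT i, _, hfT k, _, hfT j, hf_ne (hij.trans hjk).ne, hf_ne hjk.ne', hf_ne hij.ne,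
    Set.mem_uIcc.mpr (Or.inl ⟨?_, ?_⟩), hy⟩
  · exact Prod.Lex.monotone_fst_ofLex (f.monotone hij.le)
  · exact Prod.Lex.monotone_fst_ofLex (f.monotone hjk.le)

lemma Nat.dist_add_dist_of_mem_uIcc {a b c : ℕ} (h : b ∈ Set.uIcc a c) :
    Nat.dist a b + Nat.dist b c = Nat.dist a c := by
  rw [Set.mem_uIcc] at h
  simp only [Nat.dist]
  omega

namespace SimpleGraph

lemma dist_boxProd {α β : Type*} {G : SimpleGraph α} {H : SimpleGraph β}
    (hG : G.Preconnected) (hH : H.Preconnected) (x y : α × β) :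
    (G □ H).dist x y = G.dist x.1 y.1 + H.dist x.2 y.2 := by
  rw [dist, edist_boxProd, ENat.toNat_add (edist_ne_top_iff_reachable.mpr (hG _ _))
    (edist_ne_top_iff_reachable.mpr (hH _ _)), dist, dist]

lemma Walk.natDist_le_length_pathGraph {n : ℕ} {i j : Fin n} (p : (pathGraph n).Walk i j) :
    Nat.dist i j ≤ p.length := by
  induction p with
  | nil => simp
  | cons h _ ih =>
    rw [Walk.length_cons]
    have := pathGraph_adj.mp h
    simp only [Nat.dist] at ih ⊢
    omega

lemma pathGraph_dist_le_of_add_eq {n m : ℕ} {i j : Fin n} (h : (i : ℕ) + m = j) :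
    (pathGraph n).dist i j ≤ m := by
  induction m generalizing j with
  | zero => simp [Fin.ext (h : (i : ℕ) = j)]
  | succ m ih =>
    let k : Fin n := ⟨i + m, by omega⟩
    have hadj : (pathGraph n).Adj k j := pathGraph_adj.mpr (Or.inl (by simp only [k]; omega))
    calc _ ≤ (pathGraph n).dist i k + (pathGraph n).dist k j :=
          (pathGraph_preconnected n _ _).dist_triangle_left _
      _ ≤ m + 1 := add_le_add (ih rfl) (dist_eq_one_iff_adj.mpr hadj).le

lemma pathGraph_dist {n : ℕ} (i j : Fin n) : (pathGraph n).dist i j = Nat.dist i j := by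
  wlog hij : (i : ℕ) ≤ j generalizing i j
  · rw [dist_comm, Nat.dist_comm]
    exact this j i (by omega)
  obtain ⟨p, hp⟩ := (pathGraph_preconnected n i j).exists_walk_length_eq_dist
  refine le_antisymm ?_ (hp ▸ p.natDist_le_length_pathGraph)
  rw [Nat.dist_eq_sub_of_le hij]
  exact pathGraph_dist_le_of_add_eq (by omega)

end SimpleGraph

lemma isGPSet_of_dist_eq {V : Type*} {G : SimpleGraph V} {S : Set V} {d : ℕ} (hd : d ≠ 0)
    (hS : ∀ u ∈ S, ∀ v ∈ S, u ≠ v → G.dist u v = d) : isGPSet G S := by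
  intro u hu v hv w hw huv hvw huw
  rw [hS u hu v hv huv, hS u hu w hw huw, hS w hw v hv hvw.symm]
  omega

lemma gpNum_eq {V : Type*} {G : SimpleGraph V} {n : ℕ}
    (hex : ∃ S : Finset V, isGPSet G ↑S ∧ S.card = n)
    (hle : ∀ S : Finset V, isGPSet G ↑S → S.card ≤ n) : gpNum G = n := by
  have hbdd : ∀ m ∈ {m | ∃ S : Finset V, isGPSet G ↑S ∧ S.card = m}, m ≤ n := by
    rintro _ ⟨S, hS, rfl⟩
    exact hle S hS
  exact le_antisymm (csSup_le ⟨n, hex⟩ hbdd) (le_csSup ⟨n, hbdd⟩ hex)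

section BoxProdPathGraph

variable {r s : ℕ}

lemma dist_boxProd_pathGraph (x y : Fin r × Fin s) :
    (pathGraph r □ pathGraph s).dist x y = Nat.dist x.1 y.1 + Nat.dist x.2 y.2 := by
  rw [dist_boxProd (pathGraph_preconnected r) (pathGraph_preconnected s), pathGraph_dist,
    pathGraph_dist]

lemma card_le_four_of_isGPSet_boxProd_pathGraph {S : Finset (Fin r × Fin s)}
    (hS : isGPSet (pathGraph r □ pathGraph s) ↑S) : S.card ≤ 4 := by
  by_contra! h
  obtain ⟨u, hu, v, hv, w, hw, huv, hvw, huw, h₁, h₂⟩ := exists_mem_uIcc_of_five_le_card h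
  have e₁ := Nat.dist_add_dist_of_mem_uIcc (Fin.val_strictMono.monotone.mapsTo_uIcc h₁)
  have e₂ := Nat.dist_add_dist_of_mem_uIcc (Fin.val_strictMono.monotone.mapsTo_uIcc h₂)
  refine hS u hu v hv w hw huv hvw huw ?_
  rw [dist_boxProd_pathGraph, dist_boxProd_pathGraph, dist_boxProd_pathGraph, ← e₁, ← e₂]
  ring

lemma exists_isGPSet_boxProd_pathGraph_card_eq_four (hr : 3 ≤ r) (hs : 3 ≤ s) :
    ∃ S : Finset (Fin r × Fin s), isGPSet (pathGraph r □ pathGraph s) ↑S ∧ S.card = 4 := by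
  refine ⟨{(⟨0, by omega⟩, ⟨1, by omega⟩), (⟨1, by omega⟩, ⟨0, by omega⟩),
    (⟨1, by omega⟩, ⟨2, by omega⟩), (⟨2, by omega⟩, ⟨1, by omega⟩)},
    isGPSet_of_dist_eq (d := 2) (by norm_num) ?_, ?_⟩
  · intro u hu v hv huv
    simp only [coe_insert, coe_singleton, Set.mem_insert_iff, Set.mem_singleton_iff] at hu hv
    rcases hu with rfl | rfl | rfl | rfl <;> rcases hv with rfl | rfl | rfl | rfl <;>
      simp_all [dist_boxProd_pathGraph, Nat.dist]
  · simp [Prod.ext_iff]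

end BoxProdPathGraph

theorem stmt_3 (r s : ℕ) (hr : 3 ≤ r) (hs : 3 ≤ s) :
    gpNum ((SimpleGraph.pathGraph r).boxProd (SimpleGraph.pathGraph s)) = 4 :=
  gpNum_eq (exists_isGPSet_boxProd_pathGraph_card_eq_four hr hs)
    fun _ => card_le_four_of_isGPSet_boxProd_pathGraph
end

section
/- In the grid P_r □ P_s with vertex set [r] × [s], a 4-element set {(a,π(a')),(b,π(b')),(c,π(c')),(d,π(d'))} with a<b<c<d in [r] and a'<b'<c'<d' in [s] and π a permutation of {a',b',c',d'} is a general position set if and only if the sequence (π(a'),π(b'),π(c'),π(d')) contains no monotone subsequence of length 3. -/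
/-- Manhattan distance on the grid `P_r □ P_s` with vertex set `Fin r × Fin s`. -/
def gridDist {r s : ℕ} (u v : Fin r × Fin s) : ℕ :=
  ((u.1 : ℤ) - v.1).natAbs + ((u.2 : ℤ) - v.2).natAbs

/-- General position with respect to a distance function `d`. -/
def isGPSetD {α : Type*} (d : α → α → ℕ) (S : Set α) : Prop :=
  ∀ u ∈ S, ∀ v ∈ S, ∀ w ∈ S, u ≠ v → v ≠ w → u ≠ w → d u v ≠ d u w + d w v

/-!
In the ℓ¹ metric of the grid, `w` lies on a geodesic from `u` to `v` exactly when each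
coordinate of `w` lies between the corresponding coordinates of `u` and `v`. When the first
coordinates of the points are pairwise distinct, a geodesic triple must therefore be ordered
by its first coordinates with the middle point in the middle, and then the second coordinates
form a monotone subsequence of length 3; conversely every such subsequence is a geodesic triple.
-/
theorem gridDist_eq_add_iff {r s : ℕ} (u v w : Fin r × Fin s) :
    gridDist u v = gridDist u w + gridDist w v ↔
      w.1 ∈ Set.uIcc u.1 v.1 ∧ w.2 ∈ Set.uIcc u.2 v.2 := by
  simp only [gridDist, Set.mem_uIcc, Fin.le_def]
  omega

theorem StrictMono.mem_uIcc_iff {α β : Type*} [LinearOrder α] [LinearOrder β] {f : α → β}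
    (hf : StrictMono f) {i j k : α} : f j ∈ Set.uIcc (f i) (f k) ↔ j ∈ Set.uIcc i k := by
  simp only [Set.mem_uIcc, hf.le_iff_le]

theorem isGPSetD_gridDist_range_iff {ι : Type*} [LinearOrder ι] {r s : ℕ}
    (p : ι → Fin r × Fin s) (hp : StrictMono fun i ↦ (p i).1) :
    isGPSetD gridDist (Set.range p) ↔
      ¬ ∃ i j k, i < j ∧ j < k ∧ (p j).2 ∈ Set.uIcc (p i).2 (p k).2 := by
  have hinj : (p ·).Injective := fun i j h ↦ hp.injective (congrArg Prod.fst h)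
  constructor
  · rintro hgp ⟨i, j, k, hij, hjk, hy⟩
    refine hgp (p i) ⟨i, rfl⟩ (p k) ⟨k, rfl⟩ (p j) ⟨j, rfl⟩
      (hinj.ne (hij.trans hjk).ne) (hinj.ne hjk.ne') (hinj.ne hij.ne) ?_
    exact (gridDist_eq_add_iff _ _ _).2
      ⟨hp.mem_uIcc_iff.2 (Set.mem_uIcc.2 (.inl ⟨hij.le, hjk.le⟩)), hy⟩
  · rintro hmono _ ⟨i, rfl⟩ _ ⟨k, rfl⟩ _ ⟨j, rfl⟩ _ hkj hij hd
    obtain ⟨hx, hy⟩ := (gridDist_eq_add_iff _ _ _).1 hd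
    have hij : i ≠ j := fun h ↦ hij (congrArg p h)
    have hjk : j ≠ k := fun h ↦ hkj (congrArg p h).symm
    rcases Set.mem_uIcc.1 (hp.mem_uIcc_iff.1 hx) with ⟨h₁, h₂⟩ | ⟨h₁, h₂⟩
    · exact hmono ⟨i, j, k, lt_of_le_of_ne h₁ hij, lt_of_le_of_ne h₂ hjk, hy⟩
    · exact hmono ⟨k, j, i, lt_of_le_of_ne h₁ hjk.symm, lt_of_le_of_ne h₂ hij.symm,
        Set.uIcc_comm (p i).2 _ ▸ hy⟩

theorem stmt_6_general (r s : ℕ) (a b c d : Fin r) (a' b' c' d' : Fin s)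
    (hab : a < b) (hbc : b < c) (hcd : c < d)
    (π : Fin s → Fin s) :
    isGPSetD (gridDist (r := r) (s := s))
        {(a, π a'), (b, π b'), (c, π c'), (d, π d')} ↔
      ¬ ∃ i j k : Fin 4, i < j ∧ j < k ∧
        ((![π a', π b', π c', π d'] i ≤ ![π a', π b', π c', π d'] j ∧
          ![π a', π b', π c', π d'] j ≤ ![π a', π b', π c', π d'] k) ∨
         (![π a', π b', π c', π d'] k ≤ ![π a', π b', π c', π d'] j ∧
          ![π a', π b', π c', π d'] j ≤ ![π a', π b', π c', π d'] i)) := by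
  set y := ![π a', π b', π c', π d']
  have hx : StrictMono ![a, b, c, d] := by
    simp [Fin.strictMono_iff_lt_succ, Fin.forall_fin_succ, hab, hbc, hcd]
  have hrange : Set.range (fun i ↦ (![a, b, c, d] i, y i)) =
      {(a, π a'), (b, π b'), (c, π c'), (d, π d')} := by
    ext
    simp [Fin.exists_fin_succ, y, eq_comm]
  rw [← hrange, isGPSetD_gridDist_range_iff _ hx]
  simp only [Set.mem_uIcc]

theorem stmt_6 (r s : ℕ) (a b c d : Fin r) (a' b' c' d' : Fin s)
    (hab : a < b) (hbc : b < c) (hcd : c < d)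
    (hab' : a' < b') (hbc' : b' < c') (hcd' : c' < d')
    (π : Fin s → Fin s) (hπ : Set.BijOn π {a', b', c', d'} {a', b', c', d'}) :
    isGPSetD (gridDist (r := r) (s := s))
        {(a, π a'), (b, π b'), (c, π c'), (d, π d')} ↔
      ¬ ∃ i j k : Fin 4, i < j ∧ j < k ∧
        ((![π a', π b', π c', π d'] i ≤ ![π a', π b', π c', π d'] j ∧
          ![π a', π b', π c', π d'] j ≤ ![π a', π b', π c', π d'] k) ∨
         (![π a', π b', π c', π d'] k ≤ ![π a', π b', π c', π d'] j ∧
          ![π a', π b', π c', π d'] j ≤ ![π a', π b', π c', π d'] i)) :=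
  stmt_6_general r s a b c d a' b' c' d' hab hbc hcd π
end

section
/- Let r ≥ 2, s ≥ 3, and let S be a general position set of the cylinder P_r □ C_s with |S| ≥ 5. Then S is an independent set. -/
/-- Cyclic distance on the cycle `C_s` with vertex set `Fin s`. -/
def cycDist {s : ℕ} (k k' : Fin s) : ℕ :=
  min ((k : ℤ) - k').natAbs (s - ((k : ℤ) - k').natAbs)

/-- Distance on the cylinder `P_r □ C_s` with vertex set `Fin r × Fin s`. -/
def cylDist {r s : ℕ} (u v : Fin r × Fin s) : ℕ :=
  ((u.1 : ℤ) - v.1).natAbs + cycDist u.2 v.2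

/-!
If two adjacent vertices `u, v` lay in a general position set `S`, then, distances changing by at
most one along an edge, every other vertex of `S` would be equidistant from `u` and `v`. When `u, v`
differ in the path coordinate this is impossible by parity. When they are adjacent on the cycle, at
most one cycle position is equidistant from them, so the remaining (at least three) vertices of `S`
lie on one copy of `P_r`, where one of any three is between the other two.
-/

theorem isGPSetD.dist_eq_of_dist_eq_one {α : Type*} {d : α → α → ℕ}
    (hcomm : ∀ x y, d x y = d y x) (htri : ∀ x y z, d x z ≤ d x y + d y z)
    {S : Set α} (hS : isGPSetD d S) {u v w : α} (hu : u ∈ S) (hv : v ∈ S) (hw : w ∈ S)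
    (huv : u ≠ v) (hd : d u v = 1) (hwu : w ≠ u) (hwv : w ≠ v) : d u w = d v w := by
  have h₁ := hS u hu w hw v hv (Ne.symm hwu) hwv huv
  have h₂ := hS v hv w hw u hu (Ne.symm hwv) hwu huv.symm
  have t₁ := htri u v w
  have t₂ := htri v u w
  rw [hcomm v u] at h₂ t₂
  omega

section Cylinder

variable {r s : ℕ}

theorem cylDist_self (u : Fin r × Fin s) : cylDist u u = 0 := by
  simp [cylDist, cycDist]

theorem cylDist_comm (u v : Fin r × Fin s) : cylDist u v = cylDist v u := by
  have := u.2.isLt; have := v.2.isLt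
  simp only [cylDist, cycDist]; omega

theorem cylDist_triangle (u v w : Fin r × Fin s) :
    cylDist u w ≤ cylDist u v + cylDist v w := by
  have := u.2.isLt; have := v.2.isLt; have := w.2.isLt
  simp only [cylDist, cycDist]; omega

theorem cylDist_of_snd_eq {u v : Fin r × Fin s} (h : u.2 = v.2) :
    cylDist u v = ((u.1 : ℤ) - v.1).natAbs := by
  simp [cylDist, cycDist, h]

theorem fst_eq_or_snd_eq_of_cylDist_eq_one {u v : Fin r × Fin s} (h : cylDist u v = 1) :
    u.1 = v.1 ∨ u.2 = v.2 := by
  have := u.2.isLt; have := v.2.isLt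
  simp only [cylDist, cycDist] at h
  by_cases h₁ : (u.1 : ℕ) = v.1
  · exact Or.inl (Fin.ext h₁)
  · exact Or.inr (Fin.ext (by omega))

theorem eq_of_cycDist_eq_of_cycDist_eq_one {k k' l l' : Fin s} (h : cycDist k k' = 1)
    (hl : cycDist k l = cycDist k' l) (hl' : cycDist k l' = cycDist k' l') : l = l' := by
  have := k.isLt; have := k'.isLt; have := l.isLt; have := l'.isLt
  simp only [cycDist] at h hl hl'
  exact Fin.ext (by omega)

theorem snd_eq_of_cylDist_eq {u v w w' : Fin r × Fin s} (h₁ : u.1 = v.1) (huv : cylDist u v = 1)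
    (hw : cylDist u w = cylDist v w) (hw' : cylDist u w' = cylDist v w') : w.2 = w'.2 := by
  simp only [cylDist, h₁, sub_self, Int.natAbs_zero, zero_add] at huv hw hw'
  exact eq_of_cycDist_eq_of_cycDist_eq_one (by omega) (by omega) (by omega)

theorem cylDist_ne_of_snd_eq {u v : Fin r × Fin s} (h₂ : u.2 = v.2) (huv : cylDist u v = 1)
    (w : Fin r × Fin s) : cylDist u w ≠ cylDist v w := by
  rw [cylDist_of_snd_eq h₂] at huv
  simp only [cylDist, h₂]
  omega

theorem not_isGPSetD_of_snd_eq {S : Set (Fin r × Fin s)} (hS : isGPSetD cylDist S)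
    {w₁ w₂ w₃ : Fin r × Fin s} (h₁ : w₁ ∈ S) (h₂ : w₂ ∈ S) (h₃ : w₃ ∈ S)
    (h₁₂ : w₁ ≠ w₂) (h₁₃ : w₁ ≠ w₃) (h₂₃ : w₂ ≠ w₃) (e₁₂ : w₁.2 = w₂.2) (e₁₃ : w₁.2 = w₃.2) :
    False := by
  have e₂₃ := e₁₂.symm.trans e₁₃
  have n₁₂ : (w₁.1 : ℕ) ≠ w₂.1 := fun h => h₁₂ (Prod.ext (Fin.ext h) e₁₂)
  have n₁₃ : (w₁.1 : ℕ) ≠ w₃.1 := fun h => h₁₃ (Prod.ext (Fin.ext h) e₁₃)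
  have n₂₃ : (w₂.1 : ℕ) ≠ w₃.1 := fun h => h₂₃ (Prod.ext (Fin.ext h) e₂₃)
  have g₁ := hS w₁ h₁ w₂ h₂ w₃ h₃ h₁₂ h₂₃ h₁₃
  have g₂ := hS w₁ h₁ w₃ h₃ w₂ h₂ h₁₃ h₂₃.symm h₁₂
  have g₃ := hS w₂ h₂ w₃ h₃ w₁ h₁ h₂₃ h₁₃.symm h₁₂.symm
  simp only [cylDist_of_snd_eq e₁₂, cylDist_of_snd_eq e₁₃, cylDist_of_snd_eq e₂₃,
    cylDist_of_snd_eq e₁₂.symm, cylDist_of_snd_eq e₂₃.symm] at g₁ g₂ g₃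
  omega

end Cylinder

theorem stmt_7_general (r s : ℕ) (S : Finset (Fin r × Fin s))
    (hgp : isGPSetD (cylDist (r := r) (s := s)) ↑S) (hcard : 5 ≤ S.card) :
    ∀ u ∈ S, ∀ v ∈ S, cylDist u v ≠ 1 := by
  intro u hu v hv huv
  have hne : u ≠ v := by
    rintro rfl
    simp [cylDist_self] at huv
  have equidistant : ∀ w ∈ S, w ≠ u → w ≠ v → cylDist u w = cylDist v w :=
    fun w hw hwu hwv => hgp.dist_eq_of_dist_eq_one cylDist_comm cylDist_triangle
      hu hv hw hne huv hwu hwv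
  have hrest : 2 < ((S.erase u).erase v).card := by
    rw [Finset.card_erase_of_mem (Finset.mem_erase.2 ⟨hne.symm, hv⟩), Finset.card_erase_of_mem hu]
    omega
  obtain ⟨w₁, h₁, w₂, h₂, w₃, h₃, h₁₂, h₁₃, h₂₃⟩ := Finset.two_lt_card.1 hrest
  simp only [Finset.mem_erase] at h₁ h₂ h₃
  have d₁ := equidistant w₁ h₁.2.2 h₁.2.1 h₁.1
  rcases fst_eq_or_snd_eq_of_cylDist_eq_one huv with hfst | hsnd
  · have d₂ := equidistant w₂ h₂.2.2 h₂.2.1 h₂.1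
    have d₃ := equidistant w₃ h₃.2.2 h₃.2.1 h₃.1
    exact not_isGPSetD_of_snd_eq hgp h₁.2.2 h₂.2.2 h₃.2.2 h₁₂ h₁₃ h₂₃
      (snd_eq_of_cylDist_eq hfst huv d₁ d₂) (snd_eq_of_cylDist_eq hfst huv d₁ d₃)
  · exact cylDist_ne_of_snd_eq hsnd huv w₁ d₁

theorem stmt_7 (r s : ℕ) (hr : 2 ≤ r) (hs : 3 ≤ s) (S : Finset (Fin r × Fin s))
    (hgp : isGPSetD (cylDist (r := r) (s := s)) ↑S) (hcard : 5 ≤ S.card) :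
    ∀ u ∈ S, ∀ v ∈ S, cylDist u v ≠ 1 :=
  stmt_7_general r s S hgp hcard
end

section
/- Let r ≥ 2, s ≥ 3, and let S be a general position set of P_r □ C_s with |S| ≥ 4. Then each C_s-layer contains at most 2 vertices of S; that is, for every i ∈ {0,…,r−1}, |S ∩ ({i} × V(C_s))| ≤ 2. -/
lemma Fin.val_sub_add_eq_or {s : ℕ} (x k : Fin s) :
    ((x - k : Fin s) : ℕ) + k = x ∨ ((x - k : Fin s) : ℕ) + k = s + x := by
  rcases le_or_gt k x with h | h
  · rw [Fin.sub_val_of_le h]; left; have : (k : ℕ) ≤ x := h; omega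
  · rw [Fin.coe_sub_iff_lt.mpr h]; right; have : (x : ℕ) < k := h; omega

lemma cycDist_eq_add_or_of_same_half {s : ℕ} (k x y : Fin s)
    (h : 2 * ((x - k : Fin s) : ℕ) ≤ s ↔ 2 * ((y - k : Fin s) : ℕ) ≤ s) :
    cycDist k y = cycDist k x + cycDist x y ∨ cycDist k x = cycDist k y + cycDist y x := by
  have hx := (x - k).isLt
  have hy := (y - k).isLt
  have hxk := Fin.val_sub_add_eq_or x k
  have hyk := Fin.val_sub_add_eq_or y k
  unfold cycDist
  omega

lemma exists_cycDist_eq_add_of_three_le_card {s : ℕ} (k : Fin s) (T : Finset (Fin s))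
    (hT : 3 ≤ T.card) :
    ∃ m ∈ T, ∃ y ∈ T, m ≠ y ∧ cycDist k y = cycDist k m + cycDist m y := by
  obtain ⟨x, hx, y, hy, hxy, hhalf⟩ :=
    Finset.exists_ne_map_eq_of_card_lt_of_maps_to (s := T) (t := Finset.univ)
      (f := fun z => decide (2 * ((z - k : Fin s) : ℕ) ≤ s))
      (by rw [Finset.card_univ, Fintype.card_bool]; omega)
      (fun _ _ => Finset.mem_coe.mpr (Finset.mem_univ _))
  rcases cycDist_eq_add_or_of_same_half k x y (decide_eq_decide.mp hhalf) with h | h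
  · exact ⟨x, hx, y, hy, hxy, h⟩
  · exact ⟨y, hy, x, hx, hxy.symm, h⟩

lemma cylDist_eq_add_of_fst_eq {r s : ℕ} (x m y : Fin r × Fin s) (hmy : m.1 = y.1)
    (h : cycDist x.2 y.2 = cycDist x.2 m.2 + cycDist m.2 y.2) :
    cylDist x y = cylDist x m + cylDist m y := by
  simp only [cylDist, hmy, sub_self, Int.natAbs_zero, zero_add]
  omega

lemma exists_cylDist_eq_add_of_three_le_card {r s : ℕ} (i : Fin r) (w : Fin r × Fin s)
    (t : Finset (Fin r × Fin s)) (ht : ∀ v ∈ t, v.1 = i) (hcard : 3 ≤ t.card) :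
    ∃ m ∈ t, ∃ y ∈ t, m ≠ y ∧ cylDist w y = cylDist w m + cylDist m y := by
  have hinj : Set.InjOn Prod.snd (t : Set (Fin r × Fin s)) := fun a ha b hb hab =>
    Prod.ext ((ht a ha).trans (ht b hb).symm) hab
  obtain ⟨m', hm', y', hy', hne, hgeo⟩ := exists_cycDist_eq_add_of_three_le_card w.2
    (t.image Prod.snd) (by rwa [Finset.card_image_of_injOn hinj])
  obtain ⟨m, hm, rfl⟩ := Finset.mem_image.mp hm'
  obtain ⟨y, hy, rfl⟩ := Finset.mem_image.mp hy'
  exact ⟨m, hm, y, hy, fun h => hne (congrArg Prod.snd h),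
    cylDist_eq_add_of_fst_eq w m y ((ht m hm).trans (ht y hy).symm) hgeo⟩

theorem stmt_8_general (r s : ℕ) (S : Finset (Fin r × Fin s))
    (hgp : isGPSetD (cylDist (r := r) (s := s)) ↑S) (hcard : 4 ≤ S.card) :
    ∀ i : Fin r, (S.filter (fun v => v.1 = i)).card ≤ 2 := by
  intro i
  by_contra! hlayer
  obtain ⟨t, hts, ht⟩ := Finset.exists_subset_card_eq hlayer
  obtain ⟨w, hwS, hwt⟩ := Finset.exists_mem_notMem_of_card_lt_card (s := t) (t := S) (by omega)
  have htS : t ⊆ S := hts.trans (Finset.filter_subset _ _)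
  obtain ⟨m, hm, y, hy, hmy, hgeo⟩ := exists_cylDist_eq_add_of_three_le_card i w t
    (fun v hv => (Finset.mem_filter.mp (hts hv)).2) ht.ge
  exact hgp w hwS y (htS hy) m (htS hm) (fun h => hwt (h ▸ hy)) hmy.symm
    (fun h => hwt (h ▸ hm)) hgeo

theorem stmt_8 (r s : ℕ) (hr : 2 ≤ r) (hs : 3 ≤ s) (S : Finset (Fin r × Fin s))
    (hgp : isGPSetD (cylDist (r := r) (s := s)) ↑S) (hcard : 4 ≤ S.card) :
    ∀ i : Fin r, (S.filter (fun v => v.1 = i)).card ≤ 2 :=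
  stmt_8_general r s S hgp hcard
end

section
/- Let r ≥ 2, s ≥ 3, and S a general position set of P_r □ C_s. If some C_s-layer contains exactly 2 vertices of S, then |S| ≤ 4. -/
/-!
Let `(i, a)` and `(i, b)` be the two vertices of `S` in layer `i`. For a vertex `w` of `S` off this
layer the row coordinates of `(i, a)`, `(i, b)`, `w` add up automatically, so general position is a
condition on the cycle alone: it puts `w.2` on one of the two open arcs between `a` and `b`, at
distance less than `s / 2` from both ends. For two such vertices `w`, `w'` general position again
reduces to the cycle, and shows that `w.2` and `w'.2` lie on the same arc exactly when `w` and `w'`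
lie on opposite sides of layer `i`. So the truth value of "`w` lies below layer `i` iff `w.2` lies
on the arc from `a` to `b`" differs for any two vertices off the layer, and there are at most two.
-/

namespace Cycle

variable {s : ℕ}

def Between (a b c : Fin s) : Prop := cycDist a c = cycDist a b + cycDist b c

def Compatible (a b x : Fin s) : Prop := ¬ Between a b x ∧ ¬ Between b a x

/-- `x` lies on the arc that runs from `a` (included) to `b` (excluded) in the positive direction. -/
def OnArc (a b x : Fin s) : Prop := x - a < b - a

lemma cycDist_eq (x y : Fin s) :
    cycDist x y = min ((x : ℕ) - y + (y - x)) (s - ((x : ℕ) - y + (y - x))) := by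
  unfold cycDist; omega

lemma val_sub_eq (a x : Fin s) :
    ((x - a : Fin s) : ℕ) = if (a : ℕ) ≤ x then (x : ℕ) - a else s + (x : ℕ) - a := by
  split_ifs with h
  · exact Fin.sub_val_of_le h
  · exact Fin.coe_sub_iff_lt.mpr (not_le.mp h)

lemma val_sub_self (a : Fin s) : ((a - a : Fin s) : ℕ) = 0 := by
  rw [Fin.sub_val_of_le le_rfl, Nat.sub_self]

lemma cycDist_sub_right (a x y : Fin s) : cycDist (x - a) (y - a) = cycDist x y := by
  rw [cycDist_eq, cycDist_eq, val_sub_eq, val_sub_eq]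
  have := x.isLt; have := y.isLt
  split_ifs <;> omega

lemma between_sub_right (d a b c : Fin s) : Between (a - d) (b - d) (c - d) ↔ Between a b c := by
  simp only [Between, cycDist_sub_right]

lemma compatible_sub_right (d a b x : Fin s) :
    Compatible (a - d) (b - d) (x - d) ↔ Compatible a b x := by
  simp only [Compatible, between_sub_right]

section Normalized

variable {a b x y : Fin s} (ha : (a : ℕ) = 0)
include ha

lemma window_of_compatible (hx : Compatible a b x) :
    (0 < (x : ℕ) ∧ x < (b : ℕ) ∧ 2 * (x : ℕ) < s ∧ 2 * ((b : ℕ) - x) < s) ∨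
      ((b : ℕ) < x ∧ 2 * (s - (x : ℕ)) < s ∧ 2 * ((x : ℕ) - b) < s) := by
  simp only [Compatible, Between, cycDist_eq, ha, zero_tsub, tsub_zero, zero_add] at hx
  omega

lemma between_of_lt_iff_not_of_val_eq_zero (hx : Compatible a b x) (hy : Compatible a b y)
    (h : ¬(x < b ↔ y < b)) : Between x a y ∨ Between x b y := by
  rw [Fin.lt_def, Fin.lt_def] at h
  simp only [Between, cycDist_eq, ha, zero_tsub, tsub_zero, zero_add]
  rcases window_of_compatible ha hx with hx | hx <;>
    rcases window_of_compatible ha hy with hy | hy <;> omega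

lemma between_of_lt_iff_of_val_eq_zero (hx : Compatible a b x) (hy : Compatible a b y)
    (h : x < b ↔ y < b) : Between a x y ∨ Between b x y := by
  rw [Fin.lt_def, Fin.lt_def] at h
  simp only [Between, cycDist_eq, ha, zero_tsub, tsub_zero, zero_add]
  rcases window_of_compatible ha hx with hx | hx <;>
    rcases window_of_compatible ha hy with hy | hy <;> omega

end Normalized

variable {a b x y : Fin s}

lemma between_of_not_onArc_iff (hx : Compatible a b x) (hy : Compatible a b y)
    (h : ¬(OnArc a b x ↔ OnArc a b y)) : Between x a y ∨ Between x b y := by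
  rw [← compatible_sub_right a] at hx hy
  rw [← between_sub_right a, ← between_sub_right a x b]
  exact between_of_lt_iff_not_of_val_eq_zero (val_sub_self a) hx hy h

lemma between_of_onArc_iff (hx : Compatible a b x) (hy : Compatible a b y)
    (h : OnArc a b x ↔ OnArc a b y) : Between a x y ∨ Between b x y := by
  rw [← compatible_sub_right a] at hx hy
  rw [← between_sub_right a, ← between_sub_right a b]
  exact between_of_lt_iff_of_val_eq_zero (val_sub_self a) hx hy h

end Cycle

open Cycle

lemma not_between_of_isGPSetD {r s : ℕ} {S : Set (Fin r × Fin s)} (hS : isGPSetD cylDist S)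
    {p m q : Fin r × Fin s} (hp : p ∈ S) (hm : m ∈ S) (hq : q ∈ S)
    (hpm : p ≠ m) (hmq : m ≠ q) (hpq : p ≠ q)
    (hrow : ((p.1 : ℤ) - q.1).natAbs = ((p.1 : ℤ) - m.1).natAbs + ((m.1 : ℤ) - q.1).natAbs) :
    ¬ Between p.2 m.2 q.2 := by
  intro hbtw
  apply hS p hp q hq m hm hpq hmq.symm hpm
  unfold cylDist
  rw [hrow, hbtw]
  ring

section Layer

variable {r s : ℕ} {S : Finset (Fin r × Fin s)} (hS : isGPSetD cylDist (S : Set (Fin r × Fin s)))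
  {i : Fin r} {a b : Fin s} (ha : (i, a) ∈ S) (hb : (i, b) ∈ S) (hab : a ≠ b)
include hS ha hb hab

lemma compatible_of_ne_layer {w : Fin r × Fin s} (hw : w ∈ S) (hwi : w.1 ≠ i) :
    Compatible a b w.2 := by
  have hne {c : Fin s} : (i, c) ≠ w := fun h => hwi (congrArg Prod.fst h).symm
  have hab' : ((i, a) : Fin r × Fin s) ≠ (i, b) := fun h => hab (congrArg Prod.snd h)
  exact ⟨not_between_of_isGPSetD hS ha hb hw hab' hne hne (by simp),
    not_between_of_isGPSetD hS hb ha hw hab'.symm hne hne (by simp)⟩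

lemma onArc_iff_of_opposite_sides {w w' : Fin r × Fin s} (hw : w ∈ S) (hw' : w' ∈ S)
    (hne : w ≠ w') (hwi : w.1 ≠ i) (hw'i : w'.1 ≠ i)
    (hrow : ((w.1 : ℤ) - w'.1).natAbs = ((w.1 : ℤ) - i).natAbs + ((i : ℤ) - w'.1).natAbs) :
    OnArc a b w.2 ↔ OnArc a b w'.2 := by
  have hne₁ {c : Fin s} : w ≠ (i, c) := fun h => hwi (congrArg Prod.fst h)
  have hne₂ {c : Fin s} : (i, c) ≠ w' := fun h => hw'i (congrArg Prod.fst h).symm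
  by_contra h
  rcases between_of_not_onArc_iff (compatible_of_ne_layer hS ha hb hab hw hwi)
    (compatible_of_ne_layer hS ha hb hab hw' hw'i) h with hbtw | hbtw
  · exact not_between_of_isGPSetD hS hw ha hw' hne₁ hne₂ hne hrow hbtw
  · exact not_between_of_isGPSetD hS hw hb hw' hne₁ hne₂ hne hrow hbtw

lemma not_onArc_iff_of_same_side {w w' : Fin r × Fin s} (hw : w ∈ S) (hw' : w' ∈ S)
    (hne : w ≠ w') (hwi : w.1 ≠ i) (hw'i : w'.1 ≠ i)
    (hrow : ((i : ℤ) - w'.1).natAbs = ((i : ℤ) - w.1).natAbs + ((w.1 : ℤ) - w'.1).natAbs) :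
    ¬(OnArc a b w.2 ↔ OnArc a b w'.2) := by
  have hne₁ {c : Fin s} : (i, c) ≠ w := fun h => hwi (congrArg Prod.fst h).symm
  have hne₂ {c : Fin s} : (i, c) ≠ w' := fun h => hw'i (congrArg Prod.fst h).symm
  intro h
  rcases between_of_onArc_iff (compatible_of_ne_layer hS ha hb hab hw hwi)
    (compatible_of_ne_layer hS ha hb hab hw' hw'i) h with hbtw | hbtw
  · exact not_between_of_isGPSetD hS ha hw hw' hne₁ hne hne₂ hrow hbtw
  · exact not_between_of_isGPSetD hS hb hw hw' hne₁ hne hne₂ hrow hbtw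

lemma below_iff_onArc_ne {w w' : Fin r × Fin s} (hw : w ∈ S) (hw' : w' ∈ S)
    (hne : w ≠ w') (hwi : w.1 ≠ i) (hw'i : w'.1 ≠ i) :
    (w.1 < i ↔ OnArc a b w.2) ↔ ¬(w'.1 < i ↔ OnArc a b w'.2) := by
  have hwi' := Fin.val_ne_of_ne hwi
  have hw'i' := Fin.val_ne_of_ne hw'i
  simp only [Fin.lt_def]
  by_cases hside : ((w.1 : ℕ) < i ↔ (w'.1 : ℕ) < i)
  · have key : ¬(OnArc a b w.2 ↔ OnArc a b w'.2) := by
      have : ((i : ℤ) - w'.1).natAbs = ((i : ℤ) - w.1).natAbs + ((w.1 : ℤ) - w'.1).natAbs ∨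
          ((i : ℤ) - w.1).natAbs = ((i : ℤ) - w'.1).natAbs + ((w'.1 : ℤ) - w.1).natAbs := by
        omega
      rcases this with hrow | hrow
      · exact not_onArc_iff_of_same_side hS ha hb hab hw hw' hne hwi hw'i hrow
      · exact fun h => not_onArc_iff_of_same_side hS ha hb hab hw' hw hne.symm hw'i hwi hrow h.symm
    tauto
  · have key := onArc_iff_of_opposite_sides hS ha hb hab hw hw' hne hwi hw'i (by omega)
    tauto

end Layer

theorem stmt_9_general (r s : ℕ) (S : Finset (Fin r × Fin s))
    (hgp : isGPSetD (cylDist (r := r) (s := s)) ↑S)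
    (hlayer : ∃ i : Fin r, (S.filter (fun v => v.1 = i)).card = 2) :
    S.card ≤ 4 := by
  obtain ⟨i, hi⟩ := hlayer
  by_contra! hcard
  have hoff : 2 < (S.filter (fun w => ¬ w.1 = i)).card := by
    have := Finset.card_filter_add_card_filter_not (s := S) (fun w => w.1 = i)
    omega
  obtain ⟨w₁, h₁, w₂, h₂, w₃, h₃, h₁₂, h₁₃, h₂₃⟩ := Finset.two_lt_card.mp hoff
  rw [Finset.mem_filter] at h₁ h₂ h₃
  obtain ⟨⟨i₁, a⟩, ⟨i₂, b⟩, hab, hlayer⟩ := Finset.card_eq_two.mp hi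
  have ha : (i₁, a) ∈ S.filter (fun v => v.1 = i) := by simp [hlayer]
  have hb : (i₂, b) ∈ S.filter (fun v => v.1 = i) := by simp [hlayer]
  rw [Finset.mem_filter] at ha hb
  obtain ⟨haS, rfl⟩ := ha
  obtain ⟨hbS, rfl⟩ := hb
  have hab : a ≠ b := fun h => hab (h ▸ rfl)
  have := below_iff_onArc_ne hgp haS hbS hab h₁.1 h₂.1 h₁₂ h₁.2 h₂.2
  have := below_iff_onArc_ne hgp haS hbS hab h₁.1 h₃.1 h₁₃ h₁.2 h₃.2
  have := below_iff_onArc_ne hgp haS hbS hab h₂.1 h₃.1 h₂₃ h₂.2 h₃.2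
  tauto

theorem stmt_9 (r s : ℕ) (hr : 2 ≤ r) (hs : 3 ≤ s) (S : Finset (Fin r × Fin s))
    (hgp : isGPSetD (cylDist (r := r) (s := s)) ↑S)
    (hlayer : ∃ i : Fin r, (S.filter (fun v => v.1 = i)).card = 2) :
    S.card ≤ 4 :=
  stmt_9_general r s S hgp hlayer
end

section
/- Let r ≥ 6 and s ≥ 3, and suppose S is a general position set of P_r □ C_s of size 5 whose projection to P_r is injective (each C_s-layer contains at most one vertex of S). Then gp(P_5 □ C_s) ≥ 5. -/
/-
Only the relative order of the rows of `S` matters: `w` lies on a geodesic from `u` to `v` in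
`P_r □ C_s` iff its row lies between theirs and its column lies on a geodesic of `C_s` between
theirs. Hence relabelling the five distinct rows of `S` order-preservingly by `0, …, 4` keeps the
columns, keeps all geodesic betweenness relations, and carries `S` to a general position set of
`P_5 □ C_s` of the same size.
-/

open Finset

lemma cycDist_triangle {s : ℕ} (a b c : Fin s) : cycDist a c ≤ cycDist a b + cycDist b c := by
  have := a.isLt; have := b.isLt; have := c.isLt
  simp only [cycDist]
  omega

lemma cylDist_eq_add_iff {r s : ℕ} (u v w : Fin r × Fin s) :
    cylDist u v = cylDist u w + cylDist w v ↔
      w.1 ∈ Set.uIcc u.1 v.1 ∧ cycDist u.2 v.2 = cycDist u.2 w.2 + cycDist w.2 v.2 := by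
  have := cycDist_triangle u.2 w.2 v.2
  simp only [cylDist, Set.mem_uIcc, Fin.le_iff_val_le_val]
  omega

lemma isGPSetD.image {α β : Type*} {d : α → α → ℕ} {d' : β → β → ℕ} {S : Set α} {f : α → β}
    (hS : isGPSetD d S)
    (hbetween : ∀ u ∈ S, ∀ v ∈ S, ∀ w ∈ S,
      d' (f u) (f v) = d' (f u) (f w) + d' (f w) (f v) → d u v = d u w + d w v) :
    isGPSetD d' (f '' S) := by
  rintro _ ⟨u, hu, rfl⟩ _ ⟨v, hv, rfl⟩ _ ⟨w, hw, rfl⟩ huv hvw huw hgeod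
  exact hS u hu v hv w hw (ne_of_apply_ne f huv) (ne_of_apply_ne f hvw) (ne_of_apply_ne f huw)
    (hbetween u hu v hv w hw hgeod)

lemma exists_strictMonoOn_fin {α : Type*} [LinearOrder α] (R : Finset α) {n : ℕ} [NeZero n]
    (hR : #R ≤ n) : ∃ φ : α → Fin n, StrictMonoOn φ R := by
  let e := R.orderIsoOfFin rfl
  refine ⟨fun i => if h : i ∈ R then Fin.castLE hR (e.symm ⟨i, h⟩) else 0, ?_⟩
  intro i hi j hj hij
  simp only [dif_pos (mem_coe.1 hi), dif_pos (mem_coe.1 hj), Fin.castLE_lt_castLE_iff]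
  exact e.symm.strictMono (Subtype.mk_lt_mk.2 hij)

section RowRelabelling

variable {r n s : ℕ} {S : Finset (Fin r × Fin s)} {φ : Fin r → Fin n}

lemma injOn_prodMap_of_strictMonoOn (hφ : StrictMonoOn φ ↑(S.image Prod.fst))
    (hrows : Set.InjOn Prod.fst (S : Set (Fin r × Fin s))) :
    Set.InjOn (Prod.map φ id) (S : Set (Fin r × Fin s)) := by
  intro u hu v hv huv
  exact hrows hu hv <| hφ.injOn (mem_coe.2 (mem_image_of_mem _ hu))
    (mem_coe.2 (mem_image_of_mem _ hv)) (congrArg Prod.fst huv)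

lemma isGPSetD_image_prodMap (hS : isGPSetD cylDist (S : Set (Fin r × Fin s)))
    (hφ : StrictMonoOn φ ↑(S.image Prod.fst)) :
    isGPSetD cylDist (S.image (Prod.map φ id) : Set (Fin n × Fin s)) := by
  rw [coe_image]
  refine hS.image fun u hu v hv w hw hgeod => ?_
  have hrow {x y} (hx : x ∈ S) (hy : y ∈ S) : φ x.1 ≤ φ y.1 ↔ x.1 ≤ y.1 :=
    hφ.le_iff_le (mem_coe.2 (mem_image_of_mem _ hx)) (mem_coe.2 (mem_image_of_mem _ hy))
  rw [cylDist_eq_add_iff] at hgeod ⊢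
  simp only [Prod.map_fst, Prod.map_snd, id, Set.mem_uIcc, hrow hu hw, hrow hw hv, hrow hv hw,
    hrow hw hu] at hgeod
  simpa only [Set.mem_uIcc] using hgeod

end RowRelabelling

theorem stmt_10_general (r s : ℕ) (S : Finset (Fin r × Fin s))
    (hgp : isGPSetD (cylDist (r := r) (s := s)) ↑S) (hcard : S.card = 5)
    (hinj : ∀ u ∈ S, ∀ v ∈ S, u.1 = v.1 → u = v) :
    ∃ T : Finset (Fin 5 × Fin s),
      isGPSetD (cylDist (r := 5) (s := s)) ↑T ∧ 5 ≤ T.card := by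
  obtain ⟨φ, hφ⟩ := exists_strictMonoOn_fin (S.image Prod.fst) (n := 5) (hcard ▸ card_image_le)
  have hrows : Set.InjOn Prod.fst ↑S := fun u hu v hv => hinj u hu v hv
  refine ⟨S.image (Prod.map φ id), isGPSetD_image_prodMap hgp hφ, ?_⟩
  rw [card_image_of_injOn (injOn_prodMap_of_strictMonoOn hφ hrows), hcard]

theorem stmt_10 (r s : ℕ) (hr : 6 ≤ r) (hs : 3 ≤ s) (S : Finset (Fin r × Fin s))
    (hgp : isGPSetD (cylDist (r := r) (s := s)) ↑S) (hcard : S.card = 5)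
    (hinj : ∀ u ∈ S, ∀ v ∈ S, u.1 = v.1 → u = v) :
    ∃ T : Finset (Fin 5 × Fin s),
      isGPSetD (cylDist (r := 5) (s := s)) ↑T ∧ 5 ≤ T.card :=
  stmt_10_general r s S hgp hcard hinj
end
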